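/- Let C be a balanced strict monoidal category. Let N(C) be the full monoidal subcategory of objects admitting a good left dual (a left dual satisfying the ribbon condition (U ⊗ θ_{U*})∘b_U = (θ_U ⊗ U*)∘b_U and θ_{U*} = (θ_U)*). Then N(C) is a ribbon category (balanced with compatible left duals for all objects, closed under tensor product and duals), and every ribbon monoidal subcategory of C is contained in N(C). -/

import Mathlib

open CategoryTheory MonoidalCategory

/-- The transpose (mate) of an endomorphism `f : X ⟶ X` with respect to a left
dual pairing `b : 𝟙 ⟶ X ⊗ Y`, `d : Y ⊗ X ⟶ 𝟙`. -/
noncomputable def mateEndo {C : Type*} [Category C] [MonoidalCategory C] {X Y : C}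
    (b : 𝟙_ C ⟶ X ⊗ Y) (d : Y ⊗ X ⟶ 𝟙_ C) (f : X ⟶ X) : Y ⟶ Y :=
  (ρ_ Y).inv ≫ (Y ◁ b) ≫ (Y ◁ (f ▷ Y)) ≫ (α_ Y X Y).inv ≫ (d ▷ Y) ≫ (λ_ Y).hom

/-- `U` has a *good left dual*: a left dual satisfying the ribbon condition and
`θ_{U*} = (θ_U)*`. -/
def HasGoodDual {C : Type*} [Category C] [MonoidalCategory C]
    (θ : ∀ X : C, X ⟶ X) (U : C) : Prop :=
  ∃ (Ud : C) (b : 𝟙_ C ⟶ U ⊗ Ud) (d : Ud ⊗ U ⟶ 𝟙_ C),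
    ((λ_ U).inv ≫ (b ▷ U) ≫ (α_ U Ud U).hom ≫ (U ◁ d) ≫ (ρ_ U).hom = 𝟙 U) ∧
    ((ρ_ Ud).inv ≫ (Ud ◁ b) ≫ (α_ Ud U Ud).inv ≫ (d ▷ Ud) ≫ (λ_ Ud).hom = 𝟙 Ud) ∧
    (b ≫ (U ◁ θ Ud) = b ≫ (θ U ▷ Ud)) ∧
    (θ Ud = mateEndo b d (θ U))

/-!
A ribbon pairing `b : 𝟙 ⟶ U ⊗ D`, i.e. `b ≫ U ◁ θ D = b ≫ θ U ▷ D`, already forces `θ D` to be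
the transpose of `θ U`: slide `θ U` across the cup and cancel the zigzag. So a good dual is
just a ribbon dual, which gives maximality at once. The braided swap of a dual pairing is a dual
pairing, and the ribbon condition follows it by naturality of the braiding. For `U ⊗ V` with the
nested coevaluation, twists on the right legs move to the left legs strand by strand, and the
double braiding of the right legs equals that of the left legs by sliding each strand around
the cups; the balancing axiom reassembles these into `θ (E ⊗ D)` and `θ (U ⊗ V)`.
-/

namespace CategoryTheory

open BraidedCategory

variable {C : Type*} [Category C] [MonoidalCategory C]

theorem unit_whiskerLeft_eq_whiskerRight (f : 𝟙_ C ⟶ 𝟙_ C) : 𝟙_ C ◁ f = f ▷ 𝟙_ C := by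
  simp [unitors_equal, unitors_inv_equal]

theorem mateEndo_eq_of_comp_whiskerLeft_eq {U D : C} {b : 𝟙_ C ⟶ U ⊗ D} (d : D ⊗ U ⟶ 𝟙_ C)
    (zig : (ρ_ D).inv ≫ (D ◁ b) ≫ (α_ D U D).inv ≫ (d ▷ D) ≫ (λ_ D).hom = 𝟙 D)
    {f : U ⟶ U} {g : D ⟶ D} (h : b ≫ U ◁ g = b ≫ f ▷ D) :
    mateEndo b d f = g := by
  unfold mateEndo
  slice_lhs 2 3 => rw [← MonoidalCategory.whiskerLeft_comp, ← h]
  rw [MonoidalCategory.whiskerLeft_comp]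
  slice_lhs 3 4 => rw [associator_inv_naturality_right]
  slice_lhs 4 5 => rw [whisker_exchange]
  slice_lhs 5 6 => rw [leftUnitor_naturality]
  slice_lhs 1 5 => rw [zig]
  simp

theorem ExactPairing.unitors_evaluation_coevaluation (U D : C) [ExactPairing U D] :
    (λ_ U).inv ≫ (η_ U D ▷ U) ≫ (α_ U D U).hom ≫ (U ◁ ε_ U D) ≫ (ρ_ U).hom = 𝟙 U := by
  simp

theorem ExactPairing.unitors_coevaluation_evaluation (U D : C) [ExactPairing U D] :
    (ρ_ D).inv ≫ (D ◁ η_ U D) ≫ (α_ D U D).inv ≫ (ε_ U D ▷ D) ≫ (λ_ D).hom = 𝟙 D := by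
  simp

@[reducible]
def ExactPairing.ofZigzag {U D : C} (b : 𝟙_ C ⟶ U ⊗ D) (d : D ⊗ U ⟶ 𝟙_ C)
    (zig₁ : (λ_ U).inv ≫ (b ▷ U) ≫ (α_ U D U).hom ≫ (U ◁ d) ≫ (ρ_ U).hom = 𝟙 U)
    (zig₂ : (ρ_ D).inv ≫ (D ◁ b) ≫ (α_ D U D).inv ≫ (d ▷ D) ≫ (λ_ D).hom = 𝟙 D) :
    ExactPairing U D where
  coevaluation' := b
  evaluation' := d
  coevaluation_evaluation' := by
    rw [← cancel_epi (ρ_ D).inv, ← cancel_mono (λ_ D).hom]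
    simpa using zig₂
  evaluation_coevaluation' := by
    rw [← cancel_epi (λ_ U).inv, ← cancel_mono (ρ_ U).hom]
    simpa using zig₁

theorem hasGoodDual_of_zigzag (θ : ∀ X : C, X ⟶ X) {U D : C} (b : 𝟙_ C ⟶ U ⊗ D)
    (d : D ⊗ U ⟶ 𝟙_ C)
    (zig₁ : (λ_ U).inv ≫ (b ▷ U) ≫ (α_ U D U).hom ≫ (U ◁ d) ≫ (ρ_ U).hom = 𝟙 U)
    (zig₂ : (ρ_ D).inv ≫ (D ◁ b) ≫ (α_ D U D).inv ≫ (d ▷ D) ≫ (λ_ D).hom = 𝟙 D)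
    (ribbon : b ≫ U ◁ θ D = b ≫ θ U ▷ D) : HasGoodDual θ U :=
  ⟨D, b, d, zig₁, zig₂, ribbon, (mateEndo_eq_of_comp_whiskerLeft_eq d zig₂ ribbon).symm⟩

theorem hasGoodDual_iff_exists_exactPairing (θ : ∀ X : C, X ⟶ X) (U : C) :
    HasGoodDual θ U ↔
      ∃ (D : C) (_ : ExactPairing U D), η_ U D ≫ U ◁ θ D = η_ U D ≫ θ U ▷ D := by
  constructor
  · rintro ⟨D, b, d, zig₁, zig₂, ribbon, -⟩
    exact ⟨D, .ofZigzag b d zig₁ zig₂, ribbon⟩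
  · rintro ⟨D, _, ribbon⟩
    exact hasGoodDual_of_zigzag θ _ _ (ExactPairing.unitors_evaluation_coevaluation U D)
      (ExactPairing.unitors_coevaluation_evaluation U D) ribbon

theorem hasGoodDual_unit (θ : ∀ X : C, X ⟶ X) : HasGoodDual θ (𝟙_ C) :=
  (hasGoodDual_iff_exists_exactPairing θ _).2
    ⟨𝟙_ C, inferInstance, by rw [unit_whiskerLeft_eq_whiskerRight]⟩

/-- Written as Mathlib's coevaluation of `ExactPairing.tensor`, so that
`η_ (U ⊗ V) (E ⊗ D)` is `tensorCoev (η_ U D) (η_ V E)` by definition. -/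
noncomputable def tensorCoev {U D V E : C} (b₁ : 𝟙_ C ⟶ U ⊗ D) (b₂ : 𝟙_ C ⟶ V ⊗ E) :
    𝟙_ C ⟶ (U ⊗ V) ⊗ (E ⊗ D) :=
  b₁ ⊗≫ (U ◁ b₂) ▷ D ⊗≫ 𝟙 _

section Tensor

variable {U D V E : C} {b₁ : 𝟙_ C ⟶ U ⊗ D} {b₂ : 𝟙_ C ⟶ V ⊗ E}

theorem tensorCoev_whiskerLeft_whiskerRight {f₂ : V ⟶ V} {g₂ : E ⟶ E}
    (h₂ : b₂ ≫ V ◁ g₂ = b₂ ≫ f₂ ▷ E) :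
    tensorCoev b₁ b₂ ≫ (U ⊗ V) ◁ (g₂ ▷ D) = tensorCoev b₁ b₂ ≫ (U ◁ f₂) ▷ (E ⊗ D) :=
  calc
    _ = b₁ ⊗≫ U ◁ ((b₂ ≫ V ◁ g₂) ▷ D) ⊗≫ 𝟙 _ := by unfold tensorCoev; monoidal
    _ = b₁ ⊗≫ U ◁ ((b₂ ≫ f₂ ▷ E) ▷ D) ⊗≫ 𝟙 _ := by rw [h₂]
    _ = _ := by unfold tensorCoev; monoidal

theorem tensorCoev_whiskerLeft_whiskerLeft {f₁ : U ⟶ U} {g₁ : D ⟶ D}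
    (h₁ : b₁ ≫ U ◁ g₁ = b₁ ≫ f₁ ▷ D) :
    tensorCoev b₁ b₂ ≫ (U ⊗ V) ◁ (E ◁ g₁) = tensorCoev b₁ b₂ ≫ (f₁ ▷ V) ▷ (E ⊗ D) :=
  calc
    _ = b₁ ⊗≫ U ◁ (b₂ ▷ D ≫ (V ⊗ E) ◁ g₁) ⊗≫ 𝟙 _ := by unfold tensorCoev; monoidal
    _ = b₁ ⊗≫ U ◁ (𝟙_ C ◁ g₁ ≫ b₂ ▷ D) ⊗≫ 𝟙 _ := by rw [whisker_exchange]
    _ = (b₁ ≫ U ◁ g₁) ⊗≫ U ◁ (b₂ ▷ D) ⊗≫ 𝟙 _ := by monoidal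
    _ = (b₁ ≫ f₁ ▷ D) ⊗≫ U ◁ (b₂ ▷ D) ⊗≫ 𝟙 _ := by rw [h₁]
    _ = b₁ ⊗≫ (f₁ ▷ (𝟙_ C ⊗ D) ≫ U ◁ (b₂ ▷ D)) ⊗≫ 𝟙 _ := by monoidal
    _ = b₁ ⊗≫ (U ◁ (b₂ ▷ D) ≫ f₁ ▷ ((V ⊗ E) ⊗ D)) ⊗≫ 𝟙 _ := by rw [whisker_exchange]
    _ = _ := by unfold tensorCoev; monoidal

theorem tensorCoev_whiskerLeft_tensorHom {f₁ : U ⟶ U} {g₁ : D ⟶ D} {f₂ : V ⟶ V} {g₂ : E ⟶ E}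
    (h₁ : b₁ ≫ U ◁ g₁ = b₁ ≫ f₁ ▷ D) (h₂ : b₂ ≫ V ◁ g₂ = b₂ ≫ f₂ ▷ E) :
    tensorCoev b₁ b₂ ≫ (U ⊗ V) ◁ (g₂ ⊗ₘ g₁) = tensorCoev b₁ b₂ ≫ (f₁ ⊗ₘ f₂) ▷ (E ⊗ D) :=
  calc
    _ = (tensorCoev b₁ b₂ ≫ (U ⊗ V) ◁ (g₂ ▷ D)) ≫ (U ⊗ V) ◁ (E ◁ g₁) := by
      rw [MonoidalCategory.tensorHom_def, MonoidalCategory.whiskerLeft_comp, Category.assoc]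
    _ = (tensorCoev b₁ b₂ ≫ (U ⊗ V) ◁ (E ◁ g₁)) ≫ (U ◁ f₂) ▷ (E ⊗ D) := by
      rw [tensorCoev_whiskerLeft_whiskerRight h₂, Category.assoc, ← whisker_exchange,
        Category.assoc]
    _ = _ := by
      rw [tensorCoev_whiskerLeft_whiskerLeft h₁, Category.assoc, ← comp_whiskerRight,
        ← MonoidalCategory.tensorHom_def]

end Tensor

section Braided

variable [BraidedCategory C]

theorem whiskerRight_comp_whiskerLeft_braiding {X Y : C} (b : 𝟙_ C ⟶ X ⊗ Y) (W : C) :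
    b ▷ W ≫ (α_ X Y W).hom ≫ X ◁ (β_ Y W).hom =
      ((λ_ W).hom ≫ (ρ_ W).inv) ≫ W ◁ b ≫ (α_ W X Y).inv ≫ (β_ X W).inv ▷ Y ≫
        (α_ X W Y).hom := by
  have h := braiding_naturality_left b W
  rw [braiding_tensor_left_hom, braiding_tensorUnit_left] at h
  rw [← cancel_mono ((α_ X W Y).inv ≫ ((β_ X W).hom ▷ Y) ≫ (α_ W X Y).hom)]
  simp only [Category.assoc] at h ⊢
  rw [h]; simp

theorem whiskerRight_comp_whiskerLeft_braiding_inv {X Y : C} (b : 𝟙_ C ⟶ X ⊗ Y) (W : C) :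
    b ▷ W ≫ (α_ X Y W).hom ≫ X ◁ (β_ W Y).inv =
      ((λ_ W).hom ≫ (ρ_ W).inv) ≫ W ◁ b ≫ (α_ W X Y).inv ≫ (β_ W X).hom ▷ Y ≫
        (α_ X W Y).hom := by
  have h := braiding_inv_naturality_left b W
  rw [braiding_tensor_right_inv, braiding_inv_tensorUnit_right] at h
  rw [← cancel_mono ((α_ X W Y).inv ≫ ((β_ W X).inv ▷ Y) ≫ (α_ W X Y).hom)]
  simp only [Category.assoc] at h ⊢
  rw [h]; simp

theorem tensorCoev_whiskerLeft_braiding {U D V E : C} (b₁ : 𝟙_ C ⟶ U ⊗ D)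
    (b₂ : 𝟙_ C ⟶ V ⊗ E) :
    tensorCoev b₁ b₂ ≫ (U ⊗ V) ◁ (β_ E D).hom = tensorCoev b₂ b₁ ≫ (β_ V U).hom ▷ (D ⊗ E) :=
  calc
    _ = b₁ ⊗≫ U ◁ (b₂ ▷ D ≫ (α_ V E D).hom ≫ V ◁ (β_ E D).hom) ⊗≫ 𝟙 _ := by
      unfold tensorCoev; monoidal
    _ = b₁ ⊗≫ U ◁ (((λ_ D).hom ≫ (ρ_ D).inv) ≫ D ◁ b₂ ≫ (α_ D V E).inv ≫
          (β_ V D).inv ▷ E ≫ (α_ V D E).hom) ⊗≫ 𝟙 _ := by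
      rw [whiskerRight_comp_whiskerLeft_braiding]
    _ = 𝟙 _ ⊗≫ (b₁ ▷ 𝟙_ C ≫ (U ⊗ D) ◁ b₂) ⊗≫ U ◁ ((β_ V D).inv ▷ E) ⊗≫ 𝟙 _ := by
      monoidal
    _ = 𝟙 _ ⊗≫ (𝟙_ C ◁ b₂ ≫ b₁ ▷ (V ⊗ E)) ⊗≫ U ◁ ((β_ V D).inv ▷ E) ⊗≫ 𝟙 _ := by
      rw [← whisker_exchange]
    _ = b₂ ⊗≫ (b₁ ▷ V ≫ (α_ U D V).hom ≫ U ◁ (β_ V D).inv) ▷ E ⊗≫ 𝟙 _ := by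
      monoidal
    _ = b₂ ⊗≫ (((λ_ V).hom ≫ (ρ_ V).inv) ≫ V ◁ b₁ ≫ (α_ V U D).inv ≫
          (β_ V U).hom ▷ D ≫ (α_ U V D).hom) ▷ E ⊗≫ 𝟙 _ := by
      rw [whiskerRight_comp_whiskerLeft_braiding_inv]
    _ = _ := by
      unfold tensorCoev; monoidal

theorem tensorCoev_whiskerLeft_doubleBraiding {U D V E : C} (b₁ : 𝟙_ C ⟶ U ⊗ D)
    (b₂ : 𝟙_ C ⟶ V ⊗ E) :
    tensorCoev b₁ b₂ ≫ (U ⊗ V) ◁ ((β_ E D).hom ≫ (β_ D E).hom) =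
      tensorCoev b₁ b₂ ≫ ((β_ U V).hom ≫ (β_ V U).hom) ▷ (E ⊗ D) := by
  rw [MonoidalCategory.whiskerLeft_comp, reassoc_of% tensorCoev_whiskerLeft_braiding,
    ← whisker_exchange, reassoc_of% tensorCoev_whiskerLeft_braiding, comp_whiskerRight]

theorem tensorCoev_ribbon (θ : ∀ X : C, X ⟶ X)
    (θ_tensor : ∀ X Y : C, θ (X ⊗ Y) = (θ X ⊗ₘ θ Y) ≫ (β_ X Y).hom ≫ (β_ Y X).hom)
    {U D V E : C} {b₁ : 𝟙_ C ⟶ U ⊗ D} {b₂ : 𝟙_ C ⟶ V ⊗ E}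
    (h₁ : b₁ ≫ U ◁ θ D = b₁ ≫ θ U ▷ D) (h₂ : b₂ ≫ V ◁ θ E = b₂ ≫ θ V ▷ E) :
    tensorCoev b₁ b₂ ≫ (U ⊗ V) ◁ θ (E ⊗ D) = tensorCoev b₁ b₂ ≫ θ (U ⊗ V) ▷ (E ⊗ D) :=
  calc
    _ = tensorCoev b₁ b₂ ≫ (θ U ⊗ₘ θ V) ▷ (E ⊗ D) ≫
          (U ⊗ V) ◁ ((β_ E D).hom ≫ (β_ D E).hom) := by
      rw [θ_tensor, MonoidalCategory.whiskerLeft_comp,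
        reassoc_of% tensorCoev_whiskerLeft_tensorHom h₁ h₂]
    _ = tensorCoev b₁ b₂ ≫ ((β_ U V).hom ≫ (β_ V U).hom) ▷ (E ⊗ D) ≫
          (θ U ⊗ₘ θ V) ▷ (E ⊗ D) := by
      rw [← whisker_exchange, reassoc_of% tensorCoev_whiskerLeft_doubleBraiding]
    _ = _ := by
      rw [θ_tensor, ← comp_whiskerRight, Category.assoc, braiding_naturality_assoc,
        braiding_naturality]

theorem comp_braiding_inv_whisker_swap {X Y : C} {b : 𝟙_ C ⟶ X ⊗ Y} {f : X ⟶ X} {g : Y ⟶ Y}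
    (h : b ≫ X ◁ g = b ≫ f ▷ Y) :
    (b ≫ (β_ Y X).inv) ≫ Y ◁ f = (b ≫ (β_ Y X).inv) ≫ g ▷ X := by
  rw [Category.assoc, ← braiding_inv_naturality_left, ← reassoc_of% h,
    braiding_inv_naturality_right, Category.assoc]

theorem HasGoodDual.tensor {θ : ∀ X : C, X ⟶ X}
    (θ_tensor : ∀ X Y : C, θ (X ⊗ Y) = (θ X ⊗ₘ θ Y) ≫ (β_ X Y).hom ≫ (β_ Y X).hom)
    {U V : C} (hU : HasGoodDual θ U) (hV : HasGoodDual θ V) : HasGoodDual θ (U ⊗ V) := by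
  obtain ⟨D, _, h₁⟩ := (hasGoodDual_iff_exists_exactPairing θ U).1 hU
  obtain ⟨E, _, h₂⟩ := (hasGoodDual_iff_exists_exactPairing θ V).1 hV
  exact (hasGoodDual_iff_exists_exactPairing θ _).2
    ⟨E ⊗ D, inferInstance, tensorCoev_ribbon θ θ_tensor h₁ h₂⟩

theorem hasGoodDual_dual_of_zigzag (θ : ∀ X : C, X ⟶ X) {U D : C} (b : 𝟙_ C ⟶ U ⊗ D)
    (d : D ⊗ U ⟶ 𝟙_ C)
    (zig₁ : (λ_ U).inv ≫ (b ▷ U) ≫ (α_ U D U).hom ≫ (U ◁ d) ≫ (ρ_ U).hom = 𝟙 U)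
    (zig₂ : (ρ_ D).inv ≫ (D ◁ b) ≫ (α_ D U D).inv ≫ (d ▷ D) ≫ (λ_ D).hom = 𝟙 D)
    (ribbon : b ≫ U ◁ θ D = b ≫ θ U ▷ D) : HasGoodDual θ D :=
  letI := ExactPairing.ofZigzag b d zig₁ zig₂
  (hasGoodDual_iff_exists_exactPairing θ D).2
    ⟨U, exactPairing_swap U D, comp_braiding_inv_whisker_swap ribbon⟩

end Braided

end CategoryTheory

theorem goodDual_subcategory_ribbon {C : Type*} [Category C] [MonoidalCategory C]
    [BraidedCategory C]
    (θ : ∀ X : C, X ⟶ X)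
    (θbal : ∀ X Y : C, θ (X ⊗ Y) = (θ X ⊗ₘ θ Y) ≫ (β_ X Y).hom ≫ (β_ Y X).hom) :
    -- the unit has a good dual
    HasGoodDual θ (𝟙_ C) ∧
    -- closure under tensor product
    (∀ U V : C, HasGoodDual θ U → HasGoodDual θ V → HasGoodDual θ (U ⊗ V)) ∧
    -- closure under duals: a good left dual again has a good left dual
    (∀ (U Ud : C) (b : 𝟙_ C ⟶ U ⊗ Ud) (d : Ud ⊗ U ⟶ 𝟙_ C),
      ((λ_ U).inv ≫ (b ▷ U) ≫ (α_ U Ud U).hom ≫ (U ◁ d) ≫ (ρ_ U).hom = 𝟙 U) →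
      ((ρ_ Ud).inv ≫ (Ud ◁ b) ≫ (α_ Ud U Ud).inv ≫ (d ▷ Ud) ≫ (λ_ Ud).hom = 𝟙 Ud) →
      (b ≫ (U ◁ θ Ud) = b ≫ (θ U ▷ Ud)) →
      (θ Ud = mateEndo b d (θ U)) →
      HasGoodDual θ Ud) ∧
    -- maximality: the ribbon condition for some left dual already yields a good dual
    (∀ (U Ud : C) (b : 𝟙_ C ⟶ U ⊗ Ud) (d : Ud ⊗ U ⟶ 𝟙_ C),
      ((λ_ U).inv ≫ (b ▷ U) ≫ (α_ U Ud U).hom ≫ (U ◁ d) ≫ (ρ_ U).hom = 𝟙 U) →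
      ((ρ_ Ud).inv ≫ (Ud ◁ b) ≫ (α_ Ud U Ud).inv ≫ (d ▷ Ud) ≫ (λ_ Ud).hom = 𝟙 Ud) →
      (b ≫ (U ◁ θ Ud) = b ≫ (θ U ▷ Ud)) →
      HasGoodDual θ U) :=
  ⟨hasGoodDual_unit θ, fun _ _ => HasGoodDual.tensor θbal,
    fun _ _ b d zig₁ zig₂ ribbon _ => hasGoodDual_dual_of_zigzag θ b d zig₁ zig₂ ribbon,
    fun _ _ b d => hasGoodDual_of_zigzag θ b d⟩
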